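/- (Verification for the time-dependent strike, case m = 0.) Set γ = r − σ²/2, b(t) = K_T·e^{−γ(T−t)} and K(t) = 2·K_T·e^{−γ(T−t)}·N(σ√(T−t)) for t ∈ [0,T]. Then for every t ∈ [0,T): K(t) − b(t) = V^e(t, b(t)) + ∫_t^T e^{−r(u−t)}·(r·K(u) − K′(u))·N( (log(b(u)/b(t)) − (r − σ²/2)(u−t)) / (σ√(u−t)) ) du, where K′ denotes the derivative of K on [t,T) and V^e(t,x) = K_T·e^{−r(T−t)}·N( (log(K_T/x) − (r − σ²/2)(T−t)) / (σ√(T−t)) ) − x·N( (log(K_T/x) − (r + σ²/2)(T−t)) / (σ√(T−t)) ) for x > 0. -/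

import Mathlib

open MeasureTheory Real Set Filter

/-- Standard normal cdf `N(x)`. -/
noncomputable def stdCdf (x : ℝ) : ℝ := ∫ y in Set.Iic x, Real.exp (-y ^ 2 / 2) / Real.sqrt (2 * Real.pi)

/-- Exercise boundary `b(t) = K_T·e^{−γ(T−t)}` with `γ = r − σ²/2`. -/
noncomputable def bndStrike (r σ T KT t : ℝ) : ℝ :=
  KT * Real.exp (-(r - σ ^ 2 / 2) * (T - t))

/-- Time-dependent strike `K(t) = 2·K_T·e^{−γ(T−t)}·N(σ√(T−t))`. -/
noncomputable def strikeFun (r σ T KT t : ℝ) : ℝ :=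
  2 * KT * Real.exp (-(r - σ ^ 2 / 2) * (T - t)) * stdCdf (σ * Real.sqrt (T - t))

/-- European put value with strike `K_T` under Black–Scholes. -/
noncomputable def VeStrike (r σ T KT t x : ℝ) : ℝ :=
  KT * Real.exp (-r * (T - t)) *
    stdCdf ((Real.log (KT / x) - (r - σ ^ 2 / 2) * (T - t)) / (σ * Real.sqrt (T - t)))
  - x * stdCdf ((Real.log (KT / x) - (r + σ ^ 2 / 2) * (T - t)) / (σ * Real.sqrt (T - t)))

/-!
Along the boundary `log (b u / b t) = γ (u - t)`, so every cdf in the integrand is `N 0 = 1/2`,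
and at `x = b t` the two arguments of `V^e` are `0` and `-σ √(T - t)`. The integrand is then half
the derivative of `u ↦ -e^{-r(u-t)} K u`, which is nonnegative because `K' ≤ r K`; monotonicity
makes it integrable despite the `1 / √(T - u)` singularity of `K'` at `T`. What remains is the
identity `K t = 2 b t N(σ √(T - t))`.
-/

noncomputable def stdPdf (x : ℝ) : ℝ := exp (-x ^ 2 / 2) / √(2 * π)

lemma stdCdf_eq_setIntegral_stdPdf (x : ℝ) : stdCdf x = ∫ y in Iic x, stdPdf y := rfl

lemma stdPdf_eq_gaussianPDFReal : stdPdf = ProbabilityTheory.gaussianPDFReal 0 1 := by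
  ext x
  simp [stdPdf, ProbabilityTheory.gaussianPDFReal, div_eq_inv_mul]

lemma continuous_stdPdf : Continuous stdPdf := by
  unfold stdPdf; fun_prop

lemma integrable_stdPdf : Integrable stdPdf := by
  rw [stdPdf_eq_gaussianPDFReal]; exact ProbabilityTheory.integrable_gaussianPDFReal 0 1

lemma integral_stdPdf : ∫ x, stdPdf x = 1 := by
  rw [stdPdf_eq_gaussianPDFReal]; exact ProbabilityTheory.integral_gaussianPDFReal_eq_one 0 one_ne_zero

lemma stdCdf_nonneg (x : ℝ) : 0 ≤ stdCdf x :=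
  setIntegral_nonneg measurableSet_Iic fun y _ => by positivity

lemma stdCdf_neg (x : ℝ) : stdCdf (-x) = 1 - stdCdf x := by
  have hreflect : stdCdf (-x) = ∫ y in Ioi x, stdPdf y := by
    simpa [stdCdf, stdPdf] using integral_comp_neg_Iic (-x) stdPdf
  rw [hreflect, ← integral_stdPdf, ← intervalIntegral.integral_Iic_add_Ioi
    integrable_stdPdf.integrableOn integrable_stdPdf.integrableOn, stdCdf_eq_setIntegral_stdPdf]
  ring

lemma stdCdf_zero : stdCdf 0 = 1 / 2 := by
  linarith [neg_zero (G := ℝ) ▸ stdCdf_neg 0]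

lemma hasDerivAt_setIntegral_Iic {E : Type*} [NormedAddCommGroup E] [NormedSpace ℝ E]
    [CompleteSpace E] {f : ℝ → E} (hf : Integrable f) (hcont : Continuous f)
    (x : ℝ) : HasDerivAt (fun x => ∫ y in Iic x, f y) (f x) x := by
  have hprim : (fun x => ∫ y in Iic x, f y) = fun x => (∫ y in Iic 0, f y) + ∫ y in 0..x, f y := by
    ext x
    rw [← intervalIntegral.integral_Iic_sub_Iic hf.integrableOn hf.integrableOn]
    abel
  rw [hprim]
  exact (intervalIntegral.integral_hasDerivAt_right hf.intervalIntegrable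
    hcont.aestronglyMeasurable.stronglyMeasurableAtFilter hcont.continuousAt).const_add _

lemma hasDerivAt_stdCdf (x : ℝ) : HasDerivAt stdCdf (stdPdf x) x :=
  hasDerivAt_setIntegral_Iic integrable_stdPdf continuous_stdPdf x

lemma continuous_stdCdf : Continuous stdCdf :=
  continuous_iff_continuousAt.2 fun x => (hasDerivAt_stdCdf x).continuousAt

lemma integral_exp_mul_sub_deriv_of_deriv_le {f : ℝ → ℝ} {r a b : ℝ} (hab : a ≤ b)
    (hcont : ContinuousOn f (Icc a b)) (hdiff : ∀ u ∈ Ioo a b, DifferentiableAt ℝ f u)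
    (hle : ∀ u ∈ Ioo a b, deriv f u ≤ r * f u) :
    ∫ u in a..b, exp (-r * (u - a)) * (r * f u - deriv f u)
      = f a - exp (-r * (b - a)) * f b := by
  set g : ℝ → ℝ := fun u => -(exp (-r * (u - a)) * f u) with hg_def
  have hg : ∀ u ∈ Ioo a b, HasDerivAt g (exp (-r * (u - a)) * (r * f u - deriv f u)) u := by
    intro u hu
    have hexp : HasDerivAt (fun u => exp (-r * (u - a))) (exp (-r * (u - a)) * -r) u := by
      simpa using (((hasDerivAt_id u).sub_const a).const_mul (-r)).exp
    exact ((hexp.mul (hdiff u hu).hasDerivAt).neg).congr_deriv (by ring)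
  have hgcont : ContinuousOn g (Icc a b) :=
    ((continuous_exp.comp (by fun_prop)).continuousOn.mul hcont).neg
  have hint : IntervalIntegrable (fun u => exp (-r * (u - a)) * (r * f u - deriv f u)) volume a b :=
    (intervalIntegrable_iff_integrableOn_Ioc_of_le hab).2 <|
      intervalIntegral.integrableOn_deriv_of_nonneg hgcont hg
        fun u hu => mul_nonneg (exp_pos _).le (sub_nonneg.2 (hle u hu))
  rw [intervalIntegral.integral_eq_sub_of_hasDerivAt_of_le hab hgcont hg hint, hg_def]
  simp only [sub_self, mul_zero, exp_zero, one_mul]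
  ring

lemma hasDerivAt_strikeFun (r σ T KT : ℝ) {u : ℝ} (hu : u < T) :
    HasDerivAt (strikeFun r σ T KT)
      ((r - σ ^ 2 / 2) * strikeFun r σ T KT u
        - KT * exp (-(r - σ ^ 2 / 2) * (T - u)) * stdPdf (σ * √(T - u)) * σ / √(T - u)) u := by
  have hτ : HasDerivAt (fun u : ℝ => T - u) (-1) u := (hasDerivAt_id u).const_sub T
  have hexp : HasDerivAt (fun u => exp (-(r - σ ^ 2 / 2) * (T - u)))
      (exp (-(r - σ ^ 2 / 2) * (T - u)) * (r - σ ^ 2 / 2)) u :=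
    (hτ.const_mul _).exp.congr_deriv (by ring)
  have hsqrt : HasDerivAt (fun u => √(T - u)) (-1 / (2 * √(T - u))) u := by
    simpa [div_eq_mul_inv] using (hτ.sqrt (by linarith))
  have hcdf : HasDerivAt (fun u => stdCdf (σ * √(T - u)))
      (stdPdf (σ * √(T - u)) * (σ * (-1 / (2 * √(T - u))))) u :=
    (hasDerivAt_stdCdf _).comp u (hsqrt.const_mul σ)
  exact ((hexp.const_mul (2 * KT)).mul hcdf).congr_deriv (by unfold strikeFun; ring)

lemma deriv_strikeFun_le (r : ℝ) {σ T KT u : ℝ} (hσ : 0 ≤ σ) (hKT : 0 ≤ KT) (hu : u < T) :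
    deriv (strikeFun r σ T KT) u ≤ r * strikeFun r σ T KT u := by
  rw [(hasDerivAt_strikeFun r σ T KT hu).deriv]
  have hK : 0 ≤ strikeFun r σ T KT u := by
    have := stdCdf_nonneg (σ * √(T - u))
    unfold strikeFun; positivity
  have hpdf : 0 ≤ KT * exp (-(r - σ ^ 2 / 2) * (T - u)) * stdPdf (σ * √(T - u)) * σ / √(T - u) := by
    unfold stdPdf; positivity
  -- `r K - K' = σ²/2 · K + (pdf term)`
  nlinarith

lemma continuous_strikeFun (r σ T KT : ℝ) : Continuous (strikeFun r σ T KT) := by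
  unfold strikeFun
  exact (continuous_const.mul (continuous_exp.comp (by fun_prop))).mul
    (continuous_stdCdf.comp (by fun_prop))

lemma strikeFun_self (r σ T KT : ℝ) : strikeFun r σ T KT T = KT := by
  simp only [strikeFun, sub_self, sqrt_zero, mul_zero, exp_zero, stdCdf_zero]
  ring

lemma bndStrike_self (r σ T KT : ℝ) : bndStrike r σ T KT T = KT := by
  simp [bndStrike]

lemma bndStrike_div_bndStrike (r σ T : ℝ) {KT : ℝ} (hKT : KT ≠ 0) (u t : ℝ) :
    bndStrike r σ T KT u / bndStrike r σ T KT t = exp ((r - σ ^ 2 / 2) * (u - t)) := by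
  rw [bndStrike, bndStrike, mul_div_mul_left _ _ hKT, ← exp_sub]
  ring_nf

lemma VeStrike_bndStrike (r : ℝ) {σ T KT t : ℝ} (hσ : σ ≠ 0) (hKT : KT ≠ 0) (ht : t < T) :
    VeStrike r σ T KT t (bndStrike r σ T KT t)
      = KT * exp (-r * (T - t)) / 2 - bndStrike r σ T KT t * (1 - stdCdf (σ * √(T - t))) := by
  have hlog : log (KT / bndStrike r σ T KT t) = (r - σ ^ 2 / 2) * (T - t) := by
    nth_rewrite 1 [← bndStrike_self r σ T KT]
    rw [bndStrike_div_bndStrike r σ T hKT, log_exp]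
  have hsqrt : √(T - t) ^ 2 = T - t := sq_sqrt (by linarith)
  have hd₂ : (log (KT / bndStrike r σ T KT t) - (r + σ ^ 2 / 2) * (T - t)) / (σ * √(T - t))
      = -(σ * √(T - t)) := by
    have : √(T - t) ≠ 0 := (sqrt_pos.2 (by linarith)).ne'
    rw [hlog, div_eq_iff (by positivity)]
    linear_combination σ ^ 2 * hsqrt
  rw [VeStrike, hd₂, stdCdf_neg, hlog, sub_self, zero_div, stdCdf_zero]
  ring

theorem strike_boundary_solves_integral_equation_general (r σ T KT : ℝ)
    (hσ : 0 < σ) (hKT : 0 < KT) :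
    ∀ t, 0 ≤ t → t < T →
      strikeFun r σ T KT t - bndStrike r σ T KT t
        = VeStrike r σ T KT t (bndStrike r σ T KT t)
          + ∫ u in t..T, Real.exp (-r * (u - t)) *
              (r * strikeFun r σ T KT u - deriv (strikeFun r σ T KT) u) *
              stdCdf ((Real.log (bndStrike r σ T KT u / bndStrike r σ T KT t)
                - (r - σ ^ 2 / 2) * (u - t)) / (σ * Real.sqrt (u - t))) := by
  intro t _ htT
  have hhalf : ∀ u, stdCdf ((log (bndStrike r σ T KT u / bndStrike r σ T KT t)
      - (r - σ ^ 2 / 2) * (u - t)) / (σ * √(u - t))) = 1 / 2 := fun u => by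
    rw [bndStrike_div_bndStrike r σ T hKT.ne', log_exp, sub_self, zero_div, stdCdf_zero]
  have hintegral := integral_exp_mul_sub_deriv_of_deriv_le htT.le
    (continuous_strikeFun r σ T KT).continuousOn
    (fun u hu => (hasDerivAt_strikeFun r σ T KT hu.2).differentiableAt)
    (fun u hu => deriv_strikeFun_le r hσ.le hKT.le hu.2)
  simp_rw [hhalf]
  rw [intervalIntegral.integral_mul_const, hintegral, VeStrike_bndStrike r hσ.ne' hKT.ne' htT,
    strikeFun_self, strikeFun, bndStrike]
  ring

theorem strike_boundary_solves_integral_equation (r σ T KT : ℝ)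
    (hr : 0 < r) (hσ : 0 < σ) (hT : 0 < T) (hKT : 0 < KT) :
    ∀ t, 0 ≤ t → t < T →
      strikeFun r σ T KT t - bndStrike r σ T KT t
        = VeStrike r σ T KT t (bndStrike r σ T KT t)
          + ∫ u in t..T, Real.exp (-r * (u - t)) *
              (r * strikeFun r σ T KT u - deriv (strikeFun r σ T KT) u) *
              stdCdf ((Real.log (bndStrike r σ T KT u / bndStrike r σ T KT t)
                - (r - σ ^ 2 / 2) * (u - t)) / (σ * Real.sqrt (u - t))) :=
  strike_boundary_solves_integral_equation_general r σ T KT hσ hKT
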